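/- For the function f defined by f'(t) = 1/√(1+2f(t)²), f(0)=0, extended oddly, and for every ξ > 0, there exists a constant C(ξ) > 0 such that f(ξt)² ≤ C(ξ)·f(t)² for all t ∈ ℝ. -/

import Mathlib

/-!
On `[0, ∞)` the function `f` is increasing and nonnegative, so its derivative
`(1 + 2 f²)^(-1/2)` is decreasing: `f` is concave there. A concave function with `f 0 ≥ 0`
satisfies `f (ξ t) ≤ ξ f t` for `ξ ≥ 1`, and monotonicity gives `f (ξ t) ≤ f t` for `ξ ≤ 1`;
squaring and oddness give the bound on all of `ℝ` with `C = max 1 ξ ^ 2`.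
-/

open Set

section ConcaveGrowth

variable {g : ℝ → ℝ}

lemma ConcaveOn.map_mul_le_mul_of_one_le (hg : ConcaveOn ℝ (Ici 0) g) (hg0 : 0 ≤ g 0)
    {ξ t : ℝ} (hξ : 1 ≤ ξ) (ht : 0 ≤ t) : g (ξ * t) ≤ ξ * g t := by
  have hξ0 : 0 < ξ := zero_lt_one.trans_le hξ
  have hcomb := hg.2 (mem_Ici.2 (mul_nonneg hξ0.le ht)) (self_mem_Ici (a := (0 : ℝ)))
    (inv_nonneg.2 hξ0.le) (sub_nonneg.2 (inv_le_one_of_one_le₀ hξ)) (add_sub_cancel _ _)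
  have hpoint : ξ⁻¹ • (ξ * t) + (1 - ξ⁻¹) • (0 : ℝ) = t := by
    rw [smul_zero, add_zero, smul_eq_mul, inv_mul_cancel_left₀ hξ0.ne']
  rw [hpoint, smul_eq_mul, smul_eq_mul] at hcomb
  calc g (ξ * t) = ξ * (ξ⁻¹ * g (ξ * t)) := by field_simp
    _ ≤ ξ * g t := by
      gcongr
      nlinarith [mul_nonneg (sub_nonneg.2 (inv_le_one_of_one_le₀ hξ)) hg0]

lemma ConcaveOn.map_mul_le_max_mul (hg : ConcaveOn ℝ (Ici 0) g) (hmono : MonotoneOn g (Ici 0))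
    (hg0 : 0 ≤ g 0) {ξ t : ℝ} (hξ : 0 ≤ ξ) (ht : 0 ≤ t) : g (ξ * t) ≤ max 1 ξ * g t := by
  have hgt : 0 ≤ g t := hg0.trans (hmono self_mem_Ici ht ht)
  rcases le_total ξ 1 with hξ1 | hξ1
  · calc g (ξ * t) ≤ g t := hmono (mem_Ici.2 (mul_nonneg hξ ht)) ht (mul_le_of_le_one_left ht hξ1)
      _ ≤ max 1 ξ * g t := le_mul_of_one_le_left hgt (le_max_left _ _)
  · calc g (ξ * t) ≤ ξ * g t := hg.map_mul_le_mul_of_one_le hg0 hξ1 ht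
      _ ≤ max 1 ξ * g t := by gcongr; exact le_max_right _ _

end ConcaveGrowth

lemma sq_map_mul_le_of_odd {g : ℝ → ℝ} (hodd : ∀ t, g (-t) = -g t) {ξ C : ℝ}
    (h : ∀ t, 0 ≤ t → g (ξ * t) ^ 2 ≤ C * g t ^ 2) (t : ℝ) : g (ξ * t) ^ 2 ≤ C * g t ^ 2 := by
  rcases le_total 0 t with ht | ht
  · exact h t ht
  · simpa [mul_neg, hodd, neg_sq] using h (-t) (neg_nonneg.2 ht)

section InvSqrtODE

variable {f : ℝ → ℝ} (hderiv : ∀ t : ℝ, 0 ≤ t → HasDerivAt f (1 / √(1 + 2 * f t ^ 2)) t)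
include hderiv

lemma monotoneOn_Ici_of_hasDerivAt_inv_sqrt : MonotoneOn f (Ici 0) :=
  monotoneOn_of_hasDerivWithinAt_nonneg (convex_Ici 0)
    (fun x hx ↦ (hderiv x hx).continuousAt.continuousWithinAt)
    (fun x hx ↦ (hderiv x (interior_subset hx)).hasDerivWithinAt)
    (fun _ _ ↦ by positivity)

lemma concaveOn_Ici_of_hasDerivAt_inv_sqrt (hf0 : 0 ≤ f 0) : ConcaveOn ℝ (Ici 0) f := by
  have hmono := monotoneOn_Ici_of_hasDerivAt_inv_sqrt hderiv
  refine AntitoneOn.concaveOn_of_deriv (convex_Ici 0)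
    (fun x hx ↦ (hderiv x hx).continuousAt.continuousWithinAt)
    (fun x hx ↦ (hderiv x (interior_subset hx)).differentiableAt.differentiableWithinAt) ?_
  rw [interior_Ici]
  intro x hx y hy hxy
  have hfx : 0 ≤ f x := hf0.trans (hmono self_mem_Ici (mem_Ici.2 hx.le) hx.le)
  have hfxy : f x ≤ f y := hmono (mem_Ici.2 hx.le) (mem_Ici.2 hy.le) hxy
  rw [(hderiv x hx.le).deriv, (hderiv y hy.le).deriv]
  gcongr

end InvSqrtODE

theorem stmt_7 (f : ℝ → ℝ) (hf0 : f 0 = 0)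
    (hodd : ∀ t : ℝ, f (-t) = -f t)
    (hderiv : ∀ t : ℝ, 0 ≤ t → HasDerivAt f (1 / Real.sqrt (1 + 2 * f t ^ 2)) t) :
    ∀ ξ : ℝ, 0 < ξ → ∃ C : ℝ, 0 < C ∧ ∀ t : ℝ, f (ξ * t) ^ 2 ≤ C * f t ^ 2 := by
  intro ξ hξ
  have hmono := monotoneOn_Ici_of_hasDerivAt_inv_sqrt hderiv
  have hconc := concaveOn_Ici_of_hasDerivAt_inv_sqrt hderiv hf0.ge
  refine ⟨max 1 ξ ^ 2, by positivity, sq_map_mul_le_of_odd hodd fun t ht ↦ ?_⟩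
  have hlin := hconc.map_mul_le_max_mul hmono hf0.ge hξ.le ht
  have hξt : 0 ≤ ξ * t := mul_nonneg hξ.le ht
  have hnonneg : 0 ≤ f (ξ * t) := hf0.ge.trans (hmono self_mem_Ici hξt hξt)
  rw [← mul_pow]
  exact pow_le_pow_left₀ hnonneg hlin 2
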